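/- arXiv:2001.08478 — 2 statements merged into one kernel-verified Lean document; each statement's English description precedes it below -/
import Mathlib

section
/- Garbage collection is handled by the star game: let (S, <) be a well-founded partial order, S' = S ∪ {⊥} with ⊥ a fresh least element, and g ≥ 1. If s is a tree labeled over S' (containing no underlined and no marked symbols) and s ↪_g* t, then s ▷* [t], where [t] is t with all underlining removed and ▷ is the Star relation over S'. -/
namespace StarGames

/-- Unranked terms over signature `σ` and variables `X`. -/
inductive Term (σ : Type) (X : Type) : Type
  | var : X → Term σ X
  | app : σ → List (Term σ X) → Term σ X

variable {σ σ' X : Type}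

/-- Relabeling of symbols. -/
def Term.relabel (h : σ → σ') : Term σ X → Term σ' X
  | .var x => .var x
  | .app f ts => .app (h f) (ts.attach.map fun ⟨t, _⟩ => t.relabel h)
decreasing_by
  have := List.sizeOf_lt_of_mem ‹_ ∈ ts›
  simp only [Term.app.sizeOf_spec]
  omega

/-- Closure of a root-step relation under contexts (rewriting inside one argument). -/
inductive Rewrite (R : Term σ X → Term σ X → Prop) : Term σ X → Term σ X → Prop
  | root {s t : Term σ X} : R s t → Rewrite R s t
  | congr {s t : Term σ X} (f : σ) (pre post : List (Term σ X)) :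
      Rewrite R s t →
      Rewrite R (Term.app f (pre ++ s :: post)) (Term.app f (pre ++ t :: post))

/-- Root steps of the swap TRS:  f(u⃗,x,y,w⃗) → f(u⃗,y,x,w⃗). -/
inductive SwapRoot : Term σ X → Term σ X → Prop
  | swap (f : σ) (us : List (Term σ X)) (x y : Term σ X) (ws : List (Term σ X)) :
      SwapRoot (Term.app f (us ++ x :: y :: ws)) (Term.app f (us ++ y :: x :: ws))

/-- One swap step, anywhere in a term. -/
def SwapStep : Term σ X → Term σ X → Prop := Rewrite (SwapRoot (σ := σ) (X := X))

/-- `≃` : the equivalence relation generated by swap steps. -/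
def TermEquiv : Term σ X → Term σ X → Prop := Relation.EqvGen SwapStep

def treeSetoid (σ X : Type) : Setoid (Term σ X) :=
  ⟨TermEquiv, Relation.EqvGen.is_equivalence _⟩

/-- (Unordered) trees: terms modulo permutation of arguments. -/
def Tree (σ X : Type) := Quotient (treeSetoid σ X)

def Tree.mk (t : Term σ X) : Tree σ X := Quotient.mk (treeSetoid σ X) t

/-- Rewrite relation induced on trees by a root-step relation. -/
def TreeRel (R : Term σ X → Term σ X → Prop) : Tree σ X → Tree σ X → Prop :=
  fun a b => ∃ s t : Term σ X, a = Tree.mk s ∧ b = Tree.mk t ∧ Rewrite R s t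

/-- Terms all of whose symbols satisfy `p`. -/
inductive Uses (p : σ → Prop) : Term σ X → Prop
  | var (x : X) : Uses p (Term.var x)
  | app (f : σ) (ts : List (Term σ X)) :
      p f → (∀ t ∈ ts, Uses p t) → Uses p (Term.app f ts)

end StarGames

namespace StarGames

/-- Markings for the Star Hydra setting: plain symbols `s`, underlined symbols
`s̲`, and starred symbols `s⋆`. -/
inductive Mark3 : Type
  | plain : Mark3
  | ul : Mark3
  | star : Mark3

variable {S : Type}

/-- The label set `S' = S ∪ {⊥}`: `some a` is `a ∈ S`, `none` is the fresh
element `⊥` below all elements of `S`. -/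
abbrev SBot (S : Type) : Type := Option S

/-- The well-founded order on `S' = S ∪ {⊥}` extending `<` by `⊥` below all
elements of `S`. -/
def ltBot (lt : S → S → Prop) : SBot S → SBot S → Prop
  | none, some _ => True
  | some a, some b => lt a b
  | _, _ => False

/-- The Star Hydra signature: symbols of `S'`, possibly underlined or starred. -/
abbrev HSig (S : Type) : Type := SBot S × Mark3

/-- Root steps of the TRS `Star` over `S'` (with its marked copies). -/
inductive StarHRoot (lt : S → S → Prop) : Term (HSig S) Empty → Term (HSig S) Empty → Prop
  | put (f : SBot S) (ts : List (Term (HSig S) Empty)) :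
      StarHRoot lt (.app (f, Mark3.plain) ts) (.app (f, Mark3.star) ts)
  | select (f : SBot S) (xs : List (Term (HSig S) Empty)) (y : Term (HSig S) Empty)
      (zs : List (Term (HSig S) Empty)) :
      StarHRoot lt (.app (f, Mark3.star) (xs ++ y :: zs)) y
  | copy (f g : SBot S) (k : ℕ) (ts : List (Term (HSig S) Empty)) :
      ltBot lt g f →
      StarHRoot lt (.app (f, Mark3.star) ts)
        (.app (g, Mark3.plain) (List.replicate k (Term.app (f, Mark3.star) ts)))
  | down (f g : SBot S) (k : ℕ) (xs ys zs : List (Term (HSig S) Empty)) :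
      StarHRoot lt (.app (f, Mark3.star) (xs ++ Term.app (g, Mark3.plain) ys :: zs))
        (.app (f, Mark3.plain)
          (xs ++ List.replicate k (Term.app (g, Mark3.star) ys) ++ zs))

/-- Root steps of the garbage-collection relation `↪_g`:
`n(x⃗, y₁, …, y_h) ↪_g n̲(x⃗)` for every `h ≥ g`. -/
inductive GRoot (g : ℕ) : Term (HSig S) Empty → Term (HSig S) Empty → Prop
  | gc (n : SBot S) (xs ys : List (Term (HSig S) Empty)) :
      g ≤ ys.length →
      GRoot g (.app (n, Mark3.plain) (xs ++ ys)) (.app (n, Mark3.ul) xs)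

/-- Remove underlining from a mark. -/
def Mark3.dropUL : Mark3 → Mark3
  | Mark3.ul => Mark3.plain
  | m => m

/-- `[t]`: the term `t` with all underlining removed. -/
def dropUnderline (t : Term (HSig S) Empty) : Term (HSig S) Empty :=
  t.relabel (fun a : HSig S => (a.1, a.2.dropUL))

/-- A tree labeled over `S'`: no underlined and no marked (starred) symbols. -/
def PlainTerm : Term (HSig S) Empty → Prop :=
  Uses (fun a : HSig S => a.2 = Mark3.plain)

/-- A tree labeled over `S`: plain marks and no occurrence of `⊥`. -/
def SPlainTerm : Term (HSig S) Empty → Prop :=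
  Uses (fun a : HSig S => a.2 = Mark3.plain ∧ a.1 ≠ none)

/-- `R^!`: a maximal `R`-reduction, i.e. `x R* y` with `y` an `R`-normal form. -/
def MaxRed {α : Type*} (R : α → α → Prop) (a b : α) : Prop :=
  Relation.ReflTransGen R a b ∧ ∀ c : α, ¬ R b c

/-- `s⋆`: the term `s` with its root symbol marked. -/
def rootStar : Term (HSig S) Empty → Term (HSig S) Empty
  | Term.var x => Term.var x
  | Term.app a ts => Term.app (a.1, Mark3.star) ts

/-- Root steps of the Star Hydra rule (chop):
`n(α, x⃗) → n̲(β̲₁, …, β̲ₖ, x⃗)` for `k ≥ 0` and `β₁, …, βₖ < α`, where `α`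
labels a leaf. -/
inductive ChopRoot (lt : S → S → Prop) : Term (HSig S) Empty → Term (HSig S) Empty → Prop
  | chop (n α : SBot S) (βs : List (SBot S)) (xs : List (Term (HSig S) Empty)) :
      (∀ β ∈ βs, ltBot lt β α) →
      ChopRoot lt
        (.app (n, Mark3.plain) (Term.app (α, Mark3.plain) [] :: xs))
        (.app (n, Mark3.ul)
          ((βs.map fun β => Term.app (β, Mark3.ul) ([] : List (Term (HSig S) Empty))) ++ xs))

/-- Root steps of the Star Hydra rule (propagate):
`n(m̲(x⃗), y⃗) → n̲(m̲(x⃗), y⃗)`. -/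
inductive PropagateRoot : Term (HSig S) Empty → Term (HSig S) Empty → Prop
  | propagate (n m : SBot S) (xs ys : List (Term (HSig S) Empty)) :
      PropagateRoot
        (.app (n, Mark3.plain) (Term.app (m, Mark3.ul) xs :: ys))
        (.app (n, Mark3.ul) (Term.app (m, Mark3.ul) xs :: ys))

/-- Root steps of the Star Hydra rule (widen):
`n̲(m̲(x⃗), y⃗) → n̲(m̲(x⃗), …, m̲(x⃗), y⃗)` with `0` or more copies. -/
inductive WidenRoot : Term (HSig S) Empty → Term (HSig S) Empty → Prop
  | widen (n m : SBot S) (k : ℕ) (xs ys : List (Term (HSig S) Empty)) :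
      WidenRoot
        (.app (n, Mark3.ul) (Term.app (m, Mark3.ul) xs :: ys))
        (.app (n, Mark3.ul) (List.replicate k (Term.app (m, Mark3.ul) xs) ++ ys))

/-- Root steps of the Star Hydra rule (lengthen):
`n̲(x⃗) → m̲(n̲(x⃗))` provided `m < n`. -/
inductive LengthenRoot (lt : S → S → Prop) : Term (HSig S) Empty → Term (HSig S) Empty → Prop
  | lengthen (n m : SBot S) (xs : List (Term (HSig S) Empty)) :
      ltBot lt m n →
      LengthenRoot lt
        (.app (n, Mark3.ul) xs)
        (.app (m, Mark3.ul) [Term.app (n, Mark3.ul) xs])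

/-- Root steps of the Star Hydra rule (waive): `m̲(x⃗) → m(x⃗)`. -/
inductive WaiveRoot : Term (HSig S) Empty → Term (HSig S) Empty → Prop
  | waive (m : SBot S) (xs : List (Term (HSig S) Empty)) :
      WaiveRoot (.app (m, Mark3.ul) xs) (.app (m, Mark3.plain) xs)

/-- The Star Hydra rewrite relation
`→_SH = →_chop · →_propagate^! · (→_widen ∪ →_lengthen)* · →_waive^!` on trees. -/
def SHRel (lt : S → S → Prop) : Tree (HSig S) Empty → Tree (HSig S) Empty → Prop :=
  fun a b =>
    ∃ c d e : Tree (HSig S) Empty,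
      TreeRel (ChopRoot lt) a c ∧
      MaxRed (TreeRel PropagateRoot) c d ∧
      Relation.ReflTransGen
        (fun x y => TreeRel WidenRoot x y ∨ TreeRel (LengthenRoot lt) x y) d e ∧
      MaxRed (TreeRel WaiveRoot) e b

end StarGames

namespace StarGames

section Aux

variable {S : Type}

lemma relabel_app {σ σ' X : Type} (h : σ → σ') (f : σ) (ts : List (Term σ X)) :
    Term.relabel h (Term.app f ts) = Term.app (h f) (ts.map (Term.relabel h)) := by
  rw [Term.relabel]
  congr 1
  rw [List.map_eq_map_iff.mpr (fun t ht => rfl) |>.symm]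
  simp [List.attach_map_val]

lemma dropUnderline_app (a : HSig S) (ts : List (Term (HSig S) Empty)) :
    dropUnderline (Term.app a ts)
      = Term.app (a.1, a.2.dropUL) (ts.map dropUnderline) :=
  relabel_app _ _ _

/-- Terms with no starred symbols. -/
def NoStar : Term (HSig S) Empty → Prop := Uses (fun a => a.2 ≠ Mark3.star)

lemma uses_app_iff {σ X : Type} {p : σ → Prop} {f : σ} {ts : List (Term σ X)} :
    Uses p (Term.app f ts) ↔ p f ∧ ∀ t ∈ ts, Uses p t := by
  constructor
  · rintro (_ | ⟨_, _, hf, hts⟩); exact ⟨hf, hts⟩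
  · rintro ⟨hf, hts⟩; exact Uses.app _ _ hf hts

lemma swap_uses {σ X : Type} {p : σ → Prop} {u v : Term σ X}
    (h : Rewrite SwapRoot u v) : Uses p u ↔ Uses p v := by
  induction h with
  | root h =>
    rcases h with ⟨f, us, x, y, ws⟩
    simp only [uses_app_iff, List.mem_append, List.mem_cons]
    constructor <;> rintro ⟨hf, hts⟩ <;> exact ⟨hf, fun t ht => hts t (by tauto)⟩
  | congr f pre post _ ih =>
    simp only [uses_app_iff, List.mem_append, List.mem_cons]
    constructor <;> rintro ⟨hf, hts⟩ <;>
      refine ⟨hf, fun t ht => ?_⟩ <;>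
      rcases ht with ht | rfl | ht
    · exact hts t (Or.inl ht)
    · exact ih.mp (hts _ (Or.inr (Or.inl rfl)))
    · exact hts t (Or.inr (Or.inr ht))
    · exact hts t (Or.inl ht)
    · exact ih.mpr (hts _ (Or.inr (Or.inl rfl)))
    · exact hts t (Or.inr (Or.inr ht))

lemma equiv_uses {σ X : Type} {p : σ → Prop} {u v : Term σ X}
    (h : TermEquiv u v) : Uses p u ↔ Uses p v := by
  induction h with
  | rel _ _ h => exact swap_uses h
  | refl => exact Iff.rfl
  | symm _ _ _ ih => exact ih.symm
  | trans _ _ _ _ _ ih1 ih2 => exact ih1.trans ih2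

lemma dropUnderline_swap {u v : Term (HSig S) Empty}
    (h : Rewrite SwapRoot u v) :
    Rewrite SwapRoot (dropUnderline u) (dropUnderline v) := by
  induction h with
  | root h =>
    rcases h with ⟨f, us, x, y, ws⟩
    rw [dropUnderline_app, dropUnderline_app, List.map_append, List.map_append,
      List.map_cons, List.map_cons, List.map_cons, List.map_cons]
    exact Rewrite.root (SwapRoot.swap _ _ _ _ _)
  | congr f pre post _ ih =>
    rw [dropUnderline_app, dropUnderline_app, List.map_append, List.map_append,
      List.map_cons, List.map_cons]
    exact Rewrite.congr _ _ _ ih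

lemma dropUnderline_equiv {u v : Term (HSig S) Empty}
    (h : TermEquiv u v) : TermEquiv (dropUnderline u) (dropUnderline v) := by
  induction h with
  | rel _ _ h => exact Relation.EqvGen.rel _ _ (dropUnderline_swap h)
  | refl x => exact Relation.EqvGen.refl _
  | symm _ _ _ ih => exact Relation.EqvGen.symm _ _ ih
  | trans _ _ _ _ _ ih1 ih2 => exact Relation.EqvGen.trans _ _ _ ih1 ih2

lemma rtg_congr {σ X : Type} {R : Term σ X → Term σ X → Prop}
    {a b : Term σ X} (h : Relation.ReflTransGen (Rewrite R) a b)
    (f : σ) (pre post : List (Term σ X)) :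
    Relation.ReflTransGen (Rewrite R)
      (Term.app f (pre ++ a :: post)) (Term.app f (pre ++ b :: post)) := by
  induction h with
  | refl => exact Relation.ReflTransGen.refl
  | tail _ h ih => exact ih.tail (Rewrite.congr f pre post h)

lemma rtg_tree {σ X : Type} {R : Term σ X → Term σ X → Prop}
    {a b : Term σ X} (h : Relation.ReflTransGen (Rewrite R) a b) :
    Relation.ReflTransGen (TreeRel R) (Tree.mk a) (Tree.mk b) := by
  induction h with
  | refl => exact Relation.ReflTransGen.refl
  | tail _ h ih => exact ih.tail ⟨_, _, rfl, rfl, h⟩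

lemma delete_args (lt : S → S → Prop) (n : SBot S)
    (xs : List (Term (HSig S) Empty)) :
    ∀ ys : List (Term (HSig S) Empty),
      (∀ y ∈ ys, ∃ (gy : SBot S) (l : List (Term (HSig S) Empty)),
        y = Term.app (gy, Mark3.plain) l) →
      Relation.ReflTransGen (Rewrite (StarHRoot lt))
        (Term.app (n, Mark3.plain) (xs ++ ys)) (Term.app (n, Mark3.plain) xs)
  | [], _ => by rw [List.append_nil]
  | y :: rest, h => by
    obtain ⟨gy, l, rfl⟩ := h _ (List.mem_cons_self)
    have s1 : Rewrite (StarHRoot lt)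
        (Term.app (n, Mark3.plain) (xs ++ Term.app (gy, Mark3.plain) l :: rest))
        (Term.app (n, Mark3.star) (xs ++ Term.app (gy, Mark3.plain) l :: rest)) :=
      Rewrite.root (StarHRoot.put _ _)
    have s2 : Rewrite (StarHRoot lt)
        (Term.app (n, Mark3.star) (xs ++ Term.app (gy, Mark3.plain) l :: rest))
        (Term.app (n, Mark3.plain) (xs ++ rest)) := by
      have := Rewrite.root (R := StarHRoot lt) (StarHRoot.down n gy 0 xs l rest)
      simpa using this
    exact Relation.ReflTransGen.trans
      ((Relation.ReflTransGen.single s1).tail s2)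
      (delete_args lt n xs rest (fun y hy => h y (List.mem_cons_of_mem _ hy)))

lemma term_not_var {σ : Type} (t : Term σ Empty) :
    ∃ f ts, t = Term.app f ts := by
  cases t with
  | var x => exact x.elim
  | app f ts => exact ⟨f, ts, rfl⟩

lemma gc_step (lt : S → S → Prop) (g : ℕ) {u v : Term (HSig S) Empty}
    (h : Rewrite (GRoot g) u v) (hu : NoStar u) :
    NoStar v ∧ Relation.ReflTransGen (Rewrite (StarHRoot lt))
      (dropUnderline u) (dropUnderline v) := by
  induction h with
  | root h =>
    rcases h with ⟨n, xs, ys, hlen⟩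
    rw [NoStar, uses_app_iff] at hu
    constructor
    · exact Uses.app _ _ (by simp) (fun t ht => hu.2 t (List.mem_append_left _ ht))
    · rw [dropUnderline_app, dropUnderline_app, List.map_append]
      exact delete_args lt n _ _ (by
        intro y hy
        simp only [List.mem_map] at hy
        obtain ⟨y0, hy0, rfl⟩ := hy
        obtain ⟨⟨a, m⟩, l, rfl⟩ := term_not_var y0
        have hm : m ≠ Mark3.star :=
          (uses_app_iff.mp (hu.2 _ (List.mem_append_right _ hy0))).1
        rw [dropUnderline_app]
        refine ⟨a, List.map dropUnderline l, ?_⟩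
        cases m with
        | plain => rfl
        | ul => rfl
        | star => exact absurd rfl hm)
  | congr f pre post hst ih =>
    rw [NoStar, uses_app_iff] at hu
    have hns : NoStar _ := hu.2 _ (List.mem_append_right _ (List.mem_cons_self))
    obtain ⟨hnt, hred⟩ := ih hns
    constructor
    · refine Uses.app _ _ hu.1 (fun x hx => ?_)
      rcases List.mem_append.mp hx with hx | hx
      · exact hu.2 x (List.mem_append_left _ hx)
      · rcases List.mem_cons.mp hx with rfl | hx
        · exact hnt
        · exact hu.2 x (List.mem_append_right _ (List.mem_cons_of_mem _ hx))
    · rw [dropUnderline_app, dropUnderline_app, List.map_append, List.map_append,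
        List.map_cons, List.map_cons]
      exact rtg_congr hred _ _ _

lemma uses_mono {σ X : Type} {p q : σ → Prop} (hpq : ∀ a, p a → q a)
    {t : Term σ X} (h : Uses p t) : Uses q t := by
  induction h with
  | var x => exact Uses.var x
  | app f ts hf hts ih => exact Uses.app f ts (hpq f hf) ih

lemma dropUnderline_plain {s : Term (HSig S) Empty} (hs : PlainTerm s) :
    dropUnderline s = s := by
  induction hs with
  | var x => exact x.elim
  | app f ts hf hts ih =>
    rw [dropUnderline_app]
    obtain ⟨a, m⟩ := f
    simp only at hf
    subst hf
    congr 1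
    · rw [show ts.map dropUnderline = ts.map id from List.map_congr_left ih,
        List.map_id]

lemma gc_rtg (lt : S → S → Prop) (g : ℕ) {a b : Tree (HSig S) Empty}
    (h : Relation.ReflTransGen (TreeRel (GRoot g)) a b) :
    ∀ u : Term (HSig S) Empty, a = Tree.mk u → NoStar u →
      ∃ v, b = Tree.mk v ∧ NoStar v ∧
        Relation.ReflTransGen (TreeRel (StarHRoot lt))
          (Tree.mk (dropUnderline u)) (Tree.mk (dropUnderline v)) := by
  induction h with
  | refl => exact fun u ha hu => ⟨u, ha, hu, Relation.ReflTransGen.refl⟩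
  | tail _ hstep ih =>
    intro u ha hu
    obtain ⟨v', hb', hv', hred⟩ := ih u ha hu
    obtain ⟨p, q, hp, hq, hpq⟩ := hstep
    have hmk : Tree.mk v' = Tree.mk p := hb' ▸ hp
    have hequiv : TermEquiv v' p := Quotient.exact hmk
    have hnp : NoStar p := (equiv_uses hequiv).mp hv'
    obtain ⟨hnq, hstar⟩ := gc_step lt g hpq hnp
    refine ⟨q, hq, hnq, hred.trans ?_⟩
    have heq : Tree.mk (dropUnderline v') = Tree.mk (dropUnderline p) :=
      Quotient.sound (dropUnderline_equiv hequiv)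
    rw [heq]
    exact rtg_tree hstar

end Aux

/-- **Garbage collection is handled by the star game.**
Let `(S, <)` be a well-founded partial order, `S' = S ∪ {⊥}` with `⊥` a fresh
least element, and `g ≥ 1`.  If `s` is a tree labeled over `S'` (containing no
underlined and no marked symbols) and `s ↪_g* t`, then `s ▷* [t]`, where `[t]`
is `t` with all 

underlining removed and `▷` is the `Star` relation over `S'`. -/
theorem garbage_collection_by_star
    {S : Type} (lt : S → S → Prop) (hirr : Irreflexive lt) (htrans : Transitive lt)
    (hwf : WellFounded lt) (g : ℕ) (hg : 1 ≤ g)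
    (s t : Term (HSig S) Empty) (hs : PlainTerm s)
    (h : Relation.ReflTransGen (TreeRel (GRoot g)) (Tree.mk s) (Tree.mk t)) :
    Relation.ReflTransGen (TreeRel (StarHRoot lt))
      (Tree.mk s) (Tree.mk (dropUnderline t)) := by
  have hns : NoStar s := uses_mono (fun a ha => by rw [ha]; exact fun h => Mark3.noConfusion h) hs
  obtain ⟨v, htv, hnv, hred⟩ := gc_rtg lt g h s rfl hns
  have he : TermEquiv t v := Quotient.exact htv
  have heq : Tree.mk (dropUnderline t) = Tree.mk (dropUnderline v) :=
    Quotient.sound (dropUnderline_equiv he)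
  rw [heq, ← dropUnderline_plain hs]
  exact hred

end StarGames
end

section
/- Let (S, <) be a well-founded partial order, S' = S ∪ {⊥} with ⊥ a fresh least element, and g ≥ 1. If s is a tree labeled over S' (no underlined, no marked symbols) and s ↪_{g+1}* · →_widen u, then there exists a tree v labeled over S' with s ▷* v ↪_g* u, where ▷ is the Star relation over S'. -/
namespace StarGames
variable {S : Type}

inductive Reach (h : ℕ) : Term (HSig S) Empty → Term (HSig S) Empty → Prop
  | plainNode (f : SBot S) {ss ss' ts' ts : List (Term (HSig S) Empty)} :
      ss.Perm ss' → List.Forall₂ (Reach h) ss' ts' → ts'.Perm ts →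
      Reach h (.app (f, .plain) ss) (.app (f, .plain) ts)
  | gcNode (f : SBot S) {ss ss₁ ss₂ ts' ts : List (Term (HSig S) Empty)} :
      ss.Perm (ss₁ ++ ss₂) → h ≤ ss₂.length →
      List.Forall₂ (Reach h) ss₁ ts' → ts'.Perm ts →
      Reach h (.app (f, .plain) ss) (.app (f, .ul) ts)

end StarGames

namespace StarGames
variable {σ X : Type}

section ListLemmas
variable {α β : Type*} {R R' : α → β → Prop}

theorem forall₂_perm_right {as : List α} {bs cs : List β}
    (h : List.Forall₂ R as bs) (p : bs.Perm cs) :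
    ∃ as', as.Perm as' ∧ List.Forall₂ R as' cs := by
  induction p generalizing as with
  | nil => exact ⟨as, .refl _, h⟩
  | cons b p ih =>
    rcases List.forall₂_cons_right_iff.1 h with ⟨x, as₁, hx, h₁, rfl⟩
    rcases ih h₁ with ⟨as', hp, hf⟩
    exact ⟨x :: as', hp.cons x, hf.cons hx⟩
  | swap x y l =>
    rcases List.forall₂_cons_right_iff.1 h with ⟨a, as₁, ha, h₁, rfl⟩
    rcases List.forall₂_cons_right_iff.1 h₁ with ⟨b, as₂, hb, h₂, rfl⟩
    exact ⟨b :: a :: as₂, .swap _ _ _, (h₂.cons ha).cons hb⟩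
  | trans p₁ p₂ ih₁ ih₂ =>
    rcases ih₁ h with ⟨as', hp, hf⟩
    rcases ih₂ hf with ⟨as'', hp', hf'⟩
    exact ⟨as'', hp.trans hp', hf'⟩

theorem forall₂_split_right {as : List α} {tp tq : List β} {c : β}
    (h : List.Forall₂ R as (tp ++ c :: tq)) :
    ∃ ap b aq, as = ap ++ b :: aq ∧ List.Forall₂ R ap tp ∧ R b c ∧ List.Forall₂ R aq tq := by
  induction tp generalizing as with
  | nil =>
    rcases List.forall₂_cons_right_iff.1 h with ⟨b, aq, hb, hq, rfl⟩
    exact ⟨[], b, aq, rfl, .nil, hb, hq⟩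
  | cons t tp ih =>
    rcases List.forall₂_cons_right_iff.1 h with ⟨a, as₁, ha, h₁, rfl⟩
    rcases ih h₁ with ⟨ap, b, aq, rfl, h₂, h₃, h₄⟩
    exact ⟨a :: ap, b, aq, rfl, h₂.cons ha, h₃, h₄⟩

theorem forall₂_append_right {as : List α} {tp tq : List β}
    (h : List.Forall₂ R as (tp ++ tq)) :
    ∃ ap aq, as = ap ++ aq ∧ List.Forall₂ R ap tp ∧ List.Forall₂ R aq tq := by
  induction tp generalizing as with
  | nil => exact ⟨[], as, rfl, .nil, h⟩
  | cons t tp ih =>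
    rcases List.forall₂_cons_right_iff.1 h with ⟨a, as₁, ha, h₁, rfl⟩
    rcases ih h₁ with ⟨ap, aq, rfl, h₂, h₃⟩
    exact ⟨a :: ap, aq, rfl, h₂.cons ha, h₃⟩

theorem forall₂_imp_mem {as : List α} {bs : List β}
    (h : List.Forall₂ R as bs) (himp : ∀ a ∈ as, ∀ b, R a b → R' a b) :
    List.Forall₂ R' as bs := by
  induction h with
  | nil => exact .nil
  | cons hab h ih =>
    exact .cons (himp _ List.mem_cons_self _ hab)
      (ih fun a ha b hb => himp a (List.mem_cons_of_mem _ ha) b hb)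

/-- cancel a middle element of a permutation -/
theorem perm_erase_middle {p q l₁ l₂ : List α} {b : α}
    (h : (p ++ b :: q).Perm (l₁ ++ b :: l₂)) : (p ++ q).Perm (l₁ ++ l₂) :=
  ((List.perm_middle.symm.trans h).trans List.perm_middle).cons_inv

end ListLemmas

theorem swapStep_symm {s t : Term σ X} (h : SwapStep s t) : SwapStep t s := by
  induction h with
  | root h => rcases h with ⟨f, us, x, y, ws⟩; exact .root (.swap f us y x ws)
  | congr f pre post _ ih => exact .congr f pre post ih

theorem termEquiv_symm {s t : Term σ X} (h : TermEquiv s t) : TermEquiv t s :=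
  Relation.EqvGen.symm _ _ h

theorem termEquiv_congr {x y : Term σ X} (f : σ) (p q : List (Term σ X))
    (h : TermEquiv x y) :
    TermEquiv (.app f (p ++ x :: q)) (.app f (p ++ y :: q)) := by
  induction h with
  | rel a b hab => exact Relation.EqvGen.rel _ _ (.congr f p q hab)
  | refl a => exact Relation.EqvGen.refl _
  | symm a b _ ih => exact Relation.EqvGen.symm _ _ ih
  | trans a b c _ _ ih₁ ih₂ => exact Relation.EqvGen.trans _ _ _ ih₁ ih₂

theorem termEquiv_perm_aux {l₁ l₂ : List (Term σ X)} (h : l₁.Perm l₂) :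
    ∀ (f : σ) (pre : List (Term σ X)),
      TermEquiv (.app f (pre ++ l₁)) (.app f (pre ++ l₂)) := by
  induction h with
  | nil => exact fun f pre => Relation.EqvGen.refl _
  | cons x p ih =>
    intro f pre
    have := ih f (pre ++ [x])
    simpa [List.append_assoc] using this
  | swap x y l =>
    intro f pre
    exact Relation.EqvGen.rel _ _ (.root (.swap f pre y x l))
  | trans p₁ p₂ ih₁ ih₂ =>
    intro f pre
    exact Relation.EqvGen.trans _ _ _ (ih₁ f pre) (ih₂ f pre)

theorem termEquiv_perm {l₁ l₂ : List (Term σ X)} (h : l₁.Perm l₂) (f : σ) :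
    TermEquiv (.app f l₁) (.app f l₂) := by
  simpa using termEquiv_perm_aux h f []

theorem mk_eq_iff {s t : Term σ X} : Tree.mk s = Tree.mk t ↔ TermEquiv s t := by
  constructor
  · intro h; exact Quotient.exact h
  · intro h; exact Quotient.sound h

end StarGames

namespace StarGames
variable {S : Type}

theorem plain_app_inv {a : HSig S} {ts : List (Term (HSig S) Empty)}
    (h : PlainTerm (.app a ts)) : a.2 = Mark3.plain ∧ ∀ t ∈ ts, PlainTerm t := by
  cases h with
  | app f ts hf hts => exact ⟨hf, hts⟩

theorem term_sizeOf_lt {b : Term (HSig S) Empty} {a : HSig S}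
    {ss : List (Term (HSig S) Empty)} (hb : b ∈ ss) :
    sizeOf b < sizeOf (Term.app a ss) := by
  have := List.sizeOf_lt_of_mem hb
  simp only [Term.app.sizeOf_spec]
  omega

theorem reach_refl {h : ℕ} {s : Term (HSig S) Empty} (hs : PlainTerm s) :
    Reach h s s := by
  induction hs with
  | var x => exact x.elim
  | app f ts hf hts ih =>
    obtain ⟨f₁, f₂⟩ := f
    cases hf
    exact Reach.plainNode f₁ (.refl _) (List.forall₂_same.2 ih) (.refl _)

theorem reach_mono {g h : ℕ} (hgh : g ≤ h) {s t : Term (HSig S) Empty}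
    (hr : Reach h s t) : Reach g s t := by
  have main : ∀ n (s t : Term (HSig S) Empty), sizeOf s < n → Reach h s t → Reach g s t := by
    intro n
    induction n with
    | zero => omega
    | succ n ih =>
      intro s t hsz hr
      cases hr with
      | plainNode f hp hf hq =>
        refine Reach.plainNode f hp (forall₂_imp_mem hf ?_) hq
        intro a ha b hb
        exact ih a b (by
          have : a ∈ _ := hp.mem_iff.2 ha
          have := term_sizeOf_lt (a := (f, Mark3.plain)) this
          omega) hb
      | gcNode f hp hlen hf hq =>
        refine Reach.gcNode f hp (le_trans hgh hlen) (forall₂_imp_mem hf ?_) hq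
        intro a ha b hb
        exact ih a b (by
          have : a ∈ _ := hp.mem_iff.2 (List.mem_append_left _ ha)
          have := term_sizeOf_lt (a := (f, Mark3.plain)) this
          omega) hb
  exact main (sizeOf s + 1) s t (Nat.lt_succ_self _) hr

end StarGames

namespace StarGames
variable {S : Type}

section ListLemmas2
variable {α β : Type*} {R : α → β → Prop}

theorem forall₂_split_left {e f : List α} {b : α} {ts : List β}
    (h : List.Forall₂ R (e ++ b :: f) ts) :
    ∃ tp tb tq, ts = tp ++ tb :: tq ∧ List.Forall₂ R e tp ∧ R b tb ∧ List.Forall₂ R f tq := by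
  induction e generalizing ts with
  | nil =>
    rcases List.forall₂_cons_left_iff.1 h with ⟨tb, tq, hb, hq, rfl⟩
    exact ⟨[], tb, tq, rfl, .nil, hb, hq⟩
  | cons a e ih =>
    rcases List.forall₂_cons_left_iff.1 h with ⟨tb, ts₁, hb, h₁, rfl⟩
    rcases ih h₁ with ⟨tp, tb', tq, rfl, h₂, h₃, h₄⟩
    exact ⟨tb :: tp, tb', tq, rfl, h₂.cons hb, h₃, h₄⟩

theorem perm_insert_middle {p q e f : List α} (b : α) (h : (p ++ q).Perm (e ++ f)) :
    (p ++ b :: q).Perm (e ++ b :: f) :=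
  List.perm_middle.trans ((h.cons b).trans List.perm_middle.symm)

theorem perm_swap_middle (us : List α) (x y : α) (ws : List α) :
    (us ++ x :: y :: ws).Perm (us ++ y :: x :: ws) :=
  List.Perm.append_left us (List.Perm.swap y x ws)

end ListLemmas2

theorem reach_congr_target {h : ℕ} {s x x' : Term (HSig S) Empty} {f : HSig S}
    {pre post : List (Term (HSig S) Empty)}
    (hr : Reach h s (.app f (pre ++ x :: post)))
    (hstep : ∀ b, Reach h b x → Reach h b x') :
    Reach h s (.app f (pre ++ x' :: post)) := by
  cases hr with
  | plainNode f hp hf hq =>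
    rcases forall₂_perm_right hf hq with ⟨ss'', hp', hf'⟩
    rcases forall₂_split_right hf' with ⟨ap, b, aq, rfl, h₁, h₂, h₃⟩
    exact Reach.plainNode f (hp.trans hp') (List.rel_append h₁ ((h₃).cons (hstep b h₂)))
      (.refl _)
  | gcNode f hp hlen hf hq =>
    rcases forall₂_perm_right hf hq with ⟨ss'', hp', hf'⟩
    rcases forall₂_split_right hf' with ⟨ap, b, aq, rfl, h₁, h₂, h₃⟩
    exact Reach.gcNode f (hp.trans (hp'.append_right _)) hlen
      (List.rel_append h₁ ((h₃).cons (hstep b h₂))) (.refl _)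

theorem reach_swapR {h : ℕ} {c c' : Term (HSig S) Empty} (st : SwapStep c c') :
    ∀ s, Reach h s c → Reach h s c' := by
  induction st with
  | root hr =>
    rcases hr with ⟨f, us, x, y, ws⟩
    intro s hs
    cases hs with
    | plainNode f hp hf hq =>
      exact Reach.plainNode f hp hf (hq.trans (perm_swap_middle us x y ws))
    | gcNode f hp hlen hf hq =>
      exact Reach.gcNode f hp hlen hf (hq.trans (perm_swap_middle us x y ws))
  | congr f pre post _ ih =>
    intro s hs
    exact reach_congr_target hs ih

theorem reach_swapL {h : ℕ} {s s' : Term (HSig S) Empty} (st : SwapStep s s') :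
    ∀ c, Reach h s c → Reach h s' c := by
  induction st with
  | root hr =>
    rcases hr with ⟨f, us, x, y, ws⟩
    intro c hs
    cases hs with
    | plainNode f hp hf hq =>
      exact Reach.plainNode f ((perm_swap_middle us y x ws).trans hp) hf hq
    | gcNode f hp hlen hf hq =>
      exact Reach.gcNode f ((perm_swap_middle us y x ws).trans hp) hlen hf hq
  | congr f p q st ih =>
    intro c hs
    rename_i b b'
    cases hs with
    | plainNode f hp hf hq =>
      have hb : b ∈ _ := hp.mem_iff.1 (by simp)
      rcases List.append_of_mem hb with ⟨e, f₂, rfl⟩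
      have hpq : (p ++ q).Perm (e ++ f₂) := perm_erase_middle hp
      rcases forall₂_split_left hf with ⟨tp, tb, tq, rfl, h₁, h₂, h₃⟩
      exact Reach.plainNode _ (perm_insert_middle b' hpq)
        (List.rel_append h₁ (h₃.cons (ih tb h₂))) hq
    | gcNode f hp hlen hf hq =>
      rename_i ss₁ ss₂ ts' ts
      have hb : b ∈ ss₁ ++ ss₂ := hp.mem_iff.1 (by simp)
      rcases List.mem_append.1 hb with hb | hb
      · rcases List.append_of_mem hb with ⟨e, f₂, rfl⟩
        have hpq : (p ++ q).Perm (e ++ (f₂ ++ ss₂)) := by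
          have := perm_erase_middle (l₁ := e) (l₂ := f₂ ++ ss₂)
            (hp.trans (by simp))
          exact this
        rcases forall₂_split_left hf with ⟨tp, tb, tq, rfl, h₁, h₂, h₃⟩
        refine Reach.gcNode _ ?_ hlen (List.rel_append h₁ (h₃.cons (ih tb h₂))) hq
        calc (p ++ b' :: q).Perm (e ++ b' :: (f₂ ++ ss₂)) := perm_insert_middle b' hpq
          _ = (e ++ b' :: f₂) ++ ss₂ := by simp
      · rcases List.append_of_mem hb with ⟨e, f₂, rfl⟩
        have hpq : (p ++ q).Perm ((ss₁ ++ e) ++ f₂) := by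
          have := perm_erase_middle (l₁ := ss₁ ++ e) (l₂ := f₂)
            (hp.trans (by simp))
          exact this
        refine Reach.gcNode _ (ss₂ := e ++ b' :: f₂) ?_ ?_ hf hq
        · calc (p ++ b' :: q).Perm ((ss₁ ++ e) ++ b' :: f₂) := perm_insert_middle b' hpq
            _ = ss₁ ++ (e ++ b' :: f₂) := by simp
        · simpa using hlen

theorem reach_equivR {h : ℕ} {c c' : Term (HSig S) Empty} (he : TermEquiv c c') :
    ∀ s, Reach h s c ↔ Reach h s c' := by
  induction he with
  | rel a b hab =>
    exact fun s => ⟨reach_swapR hab s, reach_swapR (swapStep_symm hab) s⟩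
  | refl a => exact fun s => Iff.rfl
  | symm a b _ ih => exact fun s => (ih s).symm
  | trans a b c _ _ ih₁ ih₂ => exact fun s => (ih₁ s).trans (ih₂ s)

theorem reach_equivL {h : ℕ} {s s' : Term (HSig S) Empty} (he : TermEquiv s s') :
    ∀ c, Reach h s c ↔ Reach h s' c := by
  induction he with
  | rel a b hab =>
    exact fun c => ⟨reach_swapL hab c, reach_swapL (swapStep_symm hab) c⟩
  | refl a => exact fun c => Iff.rfl
  | symm a b _ ih => exact fun c => (ih c).symm
  | trans a b c _ _ ih₁ ih₂ => exact fun c => (ih₁ c).trans (ih₂ c)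

theorem reach_step {h : ℕ} {c d : Term (HSig S) Empty}
    (hw : Rewrite (GRoot h) c d) : ∀ s, Reach h s c → Reach h s d := by
  induction hw with
  | root hr =>
    rcases hr with ⟨n, xs, ys, hlen⟩
    intro s hs
    cases hs with
    | plainNode f1 hp hf hq =>
      rcases forall₂_perm_right hf hq with ⟨ss'', hp', hf'⟩
      rcases forall₂_append_right hf' with ⟨a, b2, rfl, h₁, h₂⟩
      exact Reach.gcNode _ (hp.trans hp') (h₂.length_eq ▸ hlen) h₁ (.refl _)
  | congr f pre post _ ih =>
    intro s hs
    exact reach_congr_target hs ih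

end StarGames

namespace StarGames
variable {σ X : Type} {S : Type}

theorem treeRel_mk {R : Term σ X → Term σ X → Prop} {s t : Term σ X}
    (h : Rewrite R s t) : TreeRel R (Tree.mk s) (Tree.mk t) :=
  ⟨s, t, rfl, rfl, h⟩

theorem rtg_mk {R : Term σ X → Term σ X → Prop} {a b : Term σ X}
    (h : Relation.ReflTransGen (Rewrite R) a b) :
    Relation.ReflTransGen (TreeRel R) (Tree.mk a) (Tree.mk b) :=
  Relation.ReflTransGen.lift Tree.mk (fun _ _ hr => treeRel_mk hr) _ _ h

theorem treeRtg_congr {R : Term σ X → Term σ X → Prop} :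
    ∀ {A B : Tree σ X}, Relation.ReflTransGen (TreeRel R) A B →
    ∀ (x y : Term σ X), A = Tree.mk x → B = Tree.mk y →
    ∀ (f : σ) (p q : List (Term σ X)),
      Relation.ReflTransGen (TreeRel R)
        (Tree.mk (.app f (p ++ x :: q))) (Tree.mk (.app f (p ++ y :: q))) := by
  intro A B h
  induction h with
  | refl =>
    intro x y hA hB f p q
    rw [hA] at hB
    have : TermEquiv x y := mk_eq_iff.1 hB
    rw [mk_eq_iff.2 (termEquiv_congr f p q this)]
  | tail h₁ h₂ ih =>
    intro x y hA hB f p q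
    rcases h₂ with ⟨s, t, hBs, hCt, hst⟩
    refine (ih x s hA hBs f p q).tail ?_
    have : Tree.mk (Term.app f (p ++ t :: q)) = Tree.mk (Term.app f (p ++ y :: q)) := by
      rw [hCt] at hB
      exact mk_eq_iff.2 (termEquiv_congr f p q (mk_eq_iff.1 hB))
    rw [← this]
    exact treeRel_mk (Rewrite.congr f p q hst)

theorem treeRtg_congr' {R : Term σ X → Term σ X → Prop} {x y : Term σ X}
    (h : Relation.ReflTransGen (TreeRel R) (Tree.mk x) (Tree.mk y))
    (f : σ) (p q : List (Term σ X)) :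
    Relation.ReflTransGen (TreeRel R)
      (Tree.mk (.app f (p ++ x :: q))) (Tree.mk (.app f (p ++ y :: q))) :=
  treeRtg_congr h x y rfl rfl f p q

theorem treeRtg_list {R : Term σ X → Term σ X → Prop} {ss ts : List (Term σ X)}
    (h : List.Forall₂
      (fun a b => Relation.ReflTransGen (TreeRel R) (Tree.mk a) (Tree.mk b)) ss ts) :
    ∀ (f : σ) (p q : List (Term σ X)),
      Relation.ReflTransGen (TreeRel R)
        (Tree.mk (.app f (p ++ ss ++ q))) (Tree.mk (.app f (p ++ ts ++ q))) := by
  induction h with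
  | nil => intro f p q; exact .refl
  | @cons a b ss ts hab h ih =>
    intro f p q
    have s1 : Relation.ReflTransGen (TreeRel R)
        (Tree.mk (.app f (p ++ a :: (ss ++ q)))) (Tree.mk (.app f (p ++ b :: (ss ++ q)))) :=
      treeRtg_congr' hab f p (ss ++ q)
    have s2 := ih f (p ++ [b]) q
    rw [show p ++ (a :: ss) ++ q = p ++ a :: (ss ++ q) by simp,
        show p ++ (b :: ts) ++ q = (p ++ [b]) ++ ts ++ q by simp]
    refine s1.trans ?_
    rw [show p ++ b :: (ss ++ q) = (p ++ [b]) ++ ss ++ q by simp]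
    exact s2

theorem treeRtg_of_reach {h : ℕ} {v u : Term (HSig S) Empty} (hr : Reach h v u) :
    Relation.ReflTransGen (TreeRel (GRoot h)) (Tree.mk v) (Tree.mk u) := by
  have main : ∀ n (v u : Term (HSig S) Empty), sizeOf v < n → Reach h v u →
      Relation.ReflTransGen (TreeRel (GRoot h)) (Tree.mk v) (Tree.mk u) := by
    intro n
    induction n with
    | zero => omega
    | succ n ih =>
      intro v u hsz hr
      cases hr with
      | @plainNode f ss ss' ts' ts hp hf hq =>
        have hpt : List.Forall₂
            (fun a b => Relation.ReflTransGen (TreeRel (GRoot h)) (Tree.mk a) (Tree.mk b))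
            ss' ts' := by
          refine forall₂_imp_mem hf ?_
          intro a ha b hb
          refine ih a b ?_ hb
          have := term_sizeOf_lt (a := (f, Mark3.plain)) (hp.mem_iff.2 ha)
          omega
        have e1 : Tree.mk (Term.app (f, Mark3.plain) ss)
            = Tree.mk (Term.app (f, Mark3.plain) ss') := mk_eq_iff.2 (termEquiv_perm hp _)
        have e2 : Tree.mk (Term.app (f, Mark3.plain) ts')
            = Tree.mk (Term.app (f, Mark3.plain) ts) := mk_eq_iff.2 (termEquiv_perm hq _)
        have := treeRtg_list hpt (f, Mark3.plain) [] []
        simpa [e1, e2] using this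
      | @gcNode f ss ss₁ ss₂ ts' ts hp hlen hf hq =>
        have hpt : List.Forall₂
            (fun a b => Relation.ReflTransGen (TreeRel (GRoot h)) (Tree.mk a) (Tree.mk b))
            ss₁ ts' := by
          refine forall₂_imp_mem hf ?_
          intro a ha b hb
          refine ih a b ?_ hb
          have := term_sizeOf_lt (a := (f, Mark3.plain))
            (hp.mem_iff.2 (List.mem_append_left _ ha))
          omega
        have e1 : Tree.mk (Term.app (f, Mark3.plain) ss)
            = Tree.mk (Term.app (f, Mark3.plain) (ss₁ ++ ss₂)) :=
          mk_eq_iff.2 (termEquiv_perm hp _)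
        have step1 := treeRtg_list hpt (f, Mark3.plain) [] ss₂
        have step2 : TreeRel (GRoot h) (Tree.mk (Term.app (f, Mark3.plain) (ts' ++ ss₂)))
            (Tree.mk (Term.app (f, Mark3.ul) ts')) :=
          treeRel_mk (Rewrite.root (GRoot.gc f ts' ss₂ hlen))
        have e2 : Tree.mk (Term.app (f, Mark3.ul) ts')
            = Tree.mk (Term.app (f, Mark3.ul) ts) := mk_eq_iff.2 (termEquiv_perm hq _)
        rw [e1, ← e2]
        refine Relation.ReflTransGen.tail ?_ step2
        simpa using step1
  exact main (sizeOf v + 1) v u (Nat.lt_succ_self _) hr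

theorem reach_of_treeRtg {h : ℕ} {s : Term (HSig S) Empty} (hs : PlainTerm s) :
    ∀ {C : Tree (HSig S) Empty},
      Relation.ReflTransGen (TreeRel (GRoot h)) (Tree.mk s) C →
      ∃ c, C = Tree.mk c ∧ Reach h s c := by
  intro C hC
  induction hC with
  | refl => exact ⟨s, rfl, reach_refl hs⟩
  | tail h₁ h₂ ih =>
    rcases ih with ⟨b, rfl, hb⟩
    rcases h₂ with ⟨c₁, d, hBc, hCd, hcd⟩
    have : Reach h s c₁ := (reach_equivR (mk_eq_iff.1 hBc) s).1 hb
    exact ⟨d, hCd, reach_step hcd s this⟩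

theorem rewrite_rtg_congr {R : Term σ X → Term σ X → Prop} {x y : Term σ X}
    (h : Relation.ReflTransGen (Rewrite R) x y) (f : σ) (p q : List (Term σ X)) :
    Relation.ReflTransGen (Rewrite R) (.app f (p ++ x :: q)) (.app f (p ++ y :: q)) :=
  Relation.ReflTransGen.lift (fun t => Term.app f (p ++ t :: q))
    (fun _ _ hr => Rewrite.congr f p q hr) _ _ h

theorem rewrite_rtg_replicate {R : Term σ X → Term σ X → Prop} {a b : Term σ X}
    (h : Relation.ReflTransGen (Rewrite R) a b) :
    ∀ (k : ℕ) (f : σ) (p q : List (Term σ X)),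
      Relation.ReflTransGen (Rewrite R)
        (.app f (p ++ List.replicate k a ++ q)) (.app f (p ++ List.replicate k b ++ q)) := by
  intro k
  induction k with
  | zero => intro f p q; exact .refl
  | succ k ih =>
    intro f p q
    have s1 := rewrite_rtg_congr h f p (List.replicate k a ++ q)
    have s2 := ih f (p ++ [b]) q
    rw [show p ++ List.replicate (k+1) a ++ q = p ++ a :: (List.replicate k a ++ q) by
          simp [List.replicate_succ],
        show p ++ List.replicate (k+1) b ++ q = (p ++ [b]) ++ List.replicate k b ++ q by
          simp [List.replicate_succ]]
    refine s1.trans ?_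
    rw [show p ++ b :: (List.replicate k a ++ q) = (p ++ [b]) ++ List.replicate k a ++ q by
          simp]
    exact s2

end StarGames

namespace StarGames
variable {S : Type}

theorem forall₂_replicate {α β : Type*} {R : α → β → Prop} {a : α} {b : β}
    (h : R a b) (k : ℕ) :
    List.Forall₂ R (List.replicate k a) (List.replicate k b) := by
  induction k with
  | zero => exact .nil
  | succ k ih => exact .cons h ih

theorem plain_mem {a : HSig S} {ts : List (Term (HSig S) Empty)} {b : Term (HSig S) Empty}
    (h : PlainTerm (.app a ts)) (hb : b ∈ ts) : PlainTerm b :=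
  (plain_app_inv h).2 b hb

theorem core (lt : S → S → Prop) (g : ℕ) :
    ∀ {c u : Term (HSig S) Empty}, Rewrite WidenRoot c u →
    ∀ s, PlainTerm s → Reach (g + 1) s c →
    ∃ v, PlainTerm v ∧
      Relation.ReflTransGen (Rewrite (StarHRoot lt)) s v ∧ Reach g v u := by
  intro c u hw
  induction hw with
  | root hr =>
    rcases hr with ⟨n, m, k, xs, ys⟩
    intro s hplain hreach
    cases hreach with
    | @gcNode _ ss ss₁ ss₂ ts' _ hp hlen hf hq =>
      rcases forall₂_perm_right hf hq with ⟨ss₁', hp₁, hf'⟩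
      rcases List.forall₂_cons_right_iff.1 hf' with ⟨t₀, rest, ht₀, hrest, rfl⟩
      cases ht₀ with
      | @gcNode _ zs zs₁ zs₂ xs' _ hp₂ hlen₂ hf₂ hq₂ =>
        -- zs₂ is nonempty
        cases zs₂ with
        | nil => simp at hlen₂
        | cons w zs₂' =>
        -- find w inside zs
        have hwzs : w ∈ zs := hp₂.mem_iff.2 (List.mem_append_right _ List.mem_cons_self)
        rcases List.append_of_mem hwzs with ⟨p₂, q₂, rfl⟩
        have hpq₂ : (p₂ ++ q₂).Perm (zs₁ ++ zs₂') :=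
          perm_erase_middle (l₁ := zs₁) (l₂ := zs₂') hp₂
        -- t₀ is a member of ss
        have ht₀mem : Term.app (m, Mark3.plain) (p₂ ++ w :: q₂) ∈ ss :=
          hp.mem_iff.2 (List.mem_append_left _ (hp₁.mem_iff.2 List.mem_cons_self))
        have hplt₀ : PlainTerm (Term.app (m, Mark3.plain) (p₂ ++ w :: q₂)) :=
          plain_mem hplain ht₀mem
        have hplw : PlainTerm w := plain_mem hplt₀ (by simp)
        -- w is a plain application
        obtain ⟨c₁, ws, rfl⟩ : ∃ c₁ ws, w = Term.app (c₁, Mark3.plain) ws := by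
          cases w with
          | var e => exact e.elim
          | app a ws =>
            obtain ⟨a₁, a₂⟩ := a
            have := (plain_app_inv hplw).1
            simp only at this
            subst this
            exact ⟨a₁, ws, rfl⟩
        -- split ss at t₀
        rcases List.append_of_mem ht₀mem with ⟨p₁, q₁, hss⟩
        subst hss
        have hpq₁ : (p₁ ++ q₁).Perm (rest ++ ss₂) := by
          have h0 : (p₁ ++ Term.app (m, Mark3.plain)
                (p₂ ++ Term.app (c₁, Mark3.plain) ws :: q₂) :: q₁).Perm
              ([] ++ Term.app (m, Mark3.plain)
                (p₂ ++ Term.app (c₁, Mark3.plain) ws :: q₂) :: (rest ++ ss₂)) := by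
            refine (hp.trans (hp₁.append_right ss₂)).trans ?_
            simp
          simpa using perm_erase_middle (l₁ := []) (l₂ := rest ++ ss₂) h0
        set t₀' := Term.app (m, Mark3.plain) (p₂ ++ q₂) with ht₀'def
        -- the Star reduction
        have step1 : Rewrite (StarHRoot lt)
            (Term.app (n, Mark3.plain) (p₁ ++ Term.app (m, Mark3.plain)
              (p₂ ++ Term.app (c₁, Mark3.plain) ws :: q₂) :: q₁))
            (Term.app (n, Mark3.star) (p₁ ++ Term.app (m, Mark3.plain)
              (p₂ ++ Term.app (c₁, Mark3.plain) ws :: q₂) :: q₁)) :=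
          Rewrite.root (StarHRoot.put n _)
        have step2 : Rewrite (StarHRoot lt)
            (Term.app (n, Mark3.star) (p₁ ++ Term.app (m, Mark3.plain)
              (p₂ ++ Term.app (c₁, Mark3.plain) ws :: q₂) :: q₁))
            (Term.app (n, Mark3.plain)
              (p₁ ++ List.replicate k (Term.app (m, Mark3.star)
                (p₂ ++ Term.app (c₁, Mark3.plain) ws :: q₂)) ++ q₁)) :=
          Rewrite.root (StarHRoot.down n m k p₁ _ q₁)
        have astep : Rewrite (StarHRoot lt)
            (Term.app (m, Mark3.star) (p₂ ++ Term.app (c₁, Mark3.plain) ws :: q₂)) t₀' := by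
          have := Rewrite.root (R := StarHRoot lt) (StarHRoot.down m c₁ 0 p₂ ws q₂)
          simpa using this
        have step3 := rewrite_rtg_replicate (Relation.ReflTransGen.single astep) k
          (n, Mark3.plain) p₁ q₁
        refine ⟨Term.app (n, Mark3.plain) (p₁ ++ List.replicate k t₀' ++ q₁), ?_, ?_, ?_⟩
        · -- plainness of v
          refine Uses.app _ _ rfl ?_
          intro t ht
          rcases List.mem_append.1 ht with ht | ht
          · rcases List.mem_append.1 ht with ht | ht
            · exact plain_mem hplain (by simp [List.mem_append.2 (Or.inl ht)])
            · rw [List.eq_of_mem_replicate ht]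
              refine Uses.app _ _ rfl ?_
              intro z hz
              exact plain_mem hplt₀ (by rcases List.mem_append.1 hz with h | h <;> simp [h])
          · exact plain_mem hplain (by simp [ht])
        · -- star reduction
          exact ((Relation.ReflTransGen.single step1).tail step2).trans step3
        · -- Reach g v u
          have hperm : (p₁ ++ List.replicate k t₀' ++ q₁).Perm
              ((List.replicate k t₀' ++ rest) ++ ss₂) := by
            have h1 : (p₁ ++ List.replicate k t₀' ++ q₁).Perm
                (List.replicate k t₀' ++ (p₁ ++ q₁)) := by
              refine ((List.perm_append_comm (l₁ := p₁)).append_right q₁).trans ?_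
              simp [List.append_assoc]
            refine (h1.trans (List.Perm.append_left _ hpq₁)).trans ?_
            simp
          refine Reach.gcNode n hperm (by omega) ?_ (.refl _)
          refine List.rel_append ?_ (hrest.imp (fun _ _ hr => reach_mono (Nat.le_succ g) hr))
          refine forall₂_replicate ?_ k
          refine Reach.gcNode m (ss₂ := zs₂') hpq₂ (by simp at hlen₂; omega)
            (hf₂.imp (fun _ _ hr => reach_mono (Nat.le_succ g) hr)) hq₂
  | congr f pre post inner ih =>
    intro s hplain hreach
    cases hreach with
    | @plainNode f₁ ss ss' ts' _ hp hf hq =>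
      rcases forall₂_perm_right hf hq with ⟨ss'', hp', hf'⟩
      rcases forall₂_split_right hf' with ⟨a, b, d, rfl, h₁, h₂, h₃⟩
      have hbss : b ∈ ss := (hp.trans hp').mem_iff.2 (by simp)
      rcases List.append_of_mem hbss with ⟨p, q, rfl⟩
      have hplb : PlainTerm b := plain_mem hplain (by simp)
      rcases ih b hplb h₂ with ⟨vb, hvbpl, hvbstar, hvbreach⟩
      have hpq : (p ++ q).Perm (a ++ d) :=
        perm_erase_middle (hp.trans hp')
      refine ⟨Term.app (f₁, Mark3.plain) (p ++ vb :: q), ?_, ?_, ?_⟩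
      · refine Uses.app _ _ rfl ?_
        intro t ht
        rcases List.mem_append.1 ht with ht | ht
        · exact plain_mem hplain (by simp [List.mem_append.2 (Or.inl ht)])
        · rcases List.mem_cons.1 ht with rfl | ht
          · exact hvbpl
          · exact plain_mem hplain (by simp [ht])
      · exact rewrite_rtg_congr hvbstar _ p q
      · refine Reach.plainNode f₁ (perm_insert_middle vb hpq)
          (List.rel_append (h₁.imp (fun _ _ hr => reach_mono (Nat.le_succ g) hr))
            (List.Forall₂.cons hvbreach (h₃.imp (fun _ _ hr => reach_mono (Nat.le_succ g) hr))))
          (.refl _)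
    | @gcNode f₁ ss ss₁ ss₂ ts' _ hp hlen hf hq =>
      rcases forall₂_perm_right hf hq with ⟨ss₁', hp₁, hf'⟩
      rcases forall₂_split_right hf' with ⟨a, b, d, rfl, h₁, h₂, h₃⟩
      have hbss : b ∈ ss := hp.mem_iff.2 (List.mem_append_left _ (hp₁.mem_iff.2 (by simp)))
      rcases List.append_of_mem hbss with ⟨p, q, rfl⟩
      have hplb : PlainTerm b := plain_mem hplain (by simp)
      rcases ih b hplb h₂ with ⟨vb, hvbpl, hvbstar, hvbreach⟩
      have hpq : (p ++ q).Perm (a ++ (d ++ ss₂)) := by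
        refine perm_erase_middle (b := b) (l₁ := a) (l₂ := d ++ ss₂) ?_
        refine (hp.trans (hp₁.append_right ss₂)).trans ?_
        simp
      refine ⟨Term.app (f₁, Mark3.plain) (p ++ vb :: q), ?_, ?_, ?_⟩
      · refine Uses.app _ _ rfl ?_
        intro t ht
        rcases List.mem_append.1 ht with ht | ht
        · exact plain_mem hplain (by simp [List.mem_append.2 (Or.inl ht)])
        · rcases List.mem_cons.1 ht with rfl | ht
          · exact hvbpl
          · exact plain_mem hplain (by simp [ht])
      · exact rewrite_rtg_congr hvbstar _ p q
      · refine Reach.gcNode f₁ (ss₁ := a ++ vb :: d) (ss₂ := ss₂) ?_ (by omega)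
          (List.rel_append (h₁.imp (fun _ _ hr => reach_mono (Nat.le_succ g) hr))
            (List.Forall₂.cons hvbreach (h₃.imp (fun _ _ hr => reach_mono (Nat.le_succ g) hr))))
          (.refl _)
        calc (p ++ vb :: q).Perm (a ++ vb :: (d ++ ss₂)) := perm_insert_middle vb hpq
          _ = (a ++ vb :: d) ++ ss₂ := by simp

end StarGames


namespace StarGames

/-- Let `(S, <)` be a well-founded partial order, `S' = S ∪ {⊥}` with `⊥` a fresh
least element, and `g ≥ 1`.  If `s` is a tree labeled over `S'` (no underlined,
no marked symbols) and `s ↪_{g+1}* · →_widen u`, then there exists a tree `v`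
labeled over `S'` with `s ▷* v ↪_g* u`, where `▷` is the `Star` relation over `S'`. -/
theorem widen_by_star
    {S : Type} (lt : S → S → Prop) (hirr : Irreflexive lt) (htrans : Transitive lt)
    (hwf : WellFounded lt) (g : ℕ) (hg : 1 ≤ g)
    (s : Term (HSig S) Empty) (hs : PlainTerm s) (u : Tree (HSig S) Empty)
    (h : ∃ c : Tree (HSig S) Empty,
          Relation.ReflTransGen (TreeRel (GRoot (g + 1))) (Tree.mk s) c ∧
          TreeRel WidenRoot c u) :
    ∃ v : Term (HSig S) Empty, PlainTerm v ∧
      Relation.ReflTransGen (TreeRel (StarHRoot lt)) (Tree.mk s) (Tree.mk v) ∧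
      Relation.ReflTransGen (TreeRel (GRoot g)) (Tree.mk v) u := by
  obtain ⟨C, hrtg, hwiden⟩ := h
  obtain ⟨c₁, u₁, hC, hu, hw⟩ := hwiden
  obtain ⟨c₀, hC₀, hreach⟩ := reach_of_treeRtg hs hrtg
  have hequiv : TermEquiv c₀ c₁ := mk_eq_iff.1 (hC₀ ▸ hC)
  have hreach' : Reach (g + 1) s c₁ := (reach_equivR hequiv s).1 hreach
  obtain ⟨v, hvpl, hstar, hreachg⟩ := core lt g hw s hs hreach'
  exact ⟨v, hvpl, rtg_mk hstar, hu ▸ treeRtg_of_reach hreachg⟩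

end StarGames
end
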